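/- arXiv:1012.1691 — 5 statements merged into one kernel-verified Lean document; each statement's English description precedes it below -/
import Mathlib

section
/- Let u ∈ X and suppose there exist L > 0 and p ∈ Q with D p = u and ‖p‖² + ‖D p‖² ≤ L²·‖u‖². Then the element q := (1/E)·Π p satisfies ⟨u, D q⟩ ≥ ‖u‖² and ‖q‖² + ‖D q‖² ≤ F²·‖u‖², where F = (1/E)·√(B²·L² + D₀²). (Abstract form of Proposition 1, 'Divergence lifting of scalar fields': the constant F depends only on the constants of Hypothesis 1 and on the lifting constant L.) -/
open scoped RealInnerProductSpace

section GraphNorm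

variable {X Y : Type*} [NormedAddCommGroup X] [InnerProductSpace ℝ X]
  [NormedAddCommGroup Y] [InnerProductSpace ℝ Y]

lemma sq_norm_le_inner_inv_smul {v w : X} {E : ℝ} (hE : 0 < E) (h : E * ‖v‖ ^ 2 ≤ ⟪v, w⟫) :
    ‖v‖ ^ 2 ≤ ⟪v, (1 / E) • w⟫ := by
  rw [real_inner_smul_right, div_mul_eq_mul_div, one_mul, le_div_iff₀ hE, mul_comm]
  exact h

lemma sq_norm_add_sq_norm_map_smul (D : Y →ₗ[ℝ] X) (c : ℝ) (w : Y) :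
    ‖c • w‖ ^ 2 + ‖D (c • w)‖ ^ 2 = c ^ 2 * (‖w‖ ^ 2 + ‖D w‖ ^ 2) := by
  rw [map_smul, norm_smul, norm_smul, mul_pow, mul_pow, Real.norm_eq_abs, sq_abs]
  ring

lemma sq_norm_add_sq_norm_map_le (D : Y →ₗ[ℝ] X) {w p : Y} {u : X} {B L D₀ : ℝ}
    (hw : ‖w‖ ≤ B * ‖p‖) (hDw : ‖D w‖ ≤ D₀ * ‖u‖) (hp : ‖p‖ ^ 2 ≤ L ^ 2 * ‖u‖ ^ 2) :
    ‖w‖ ^ 2 + ‖D w‖ ^ 2 ≤ (B ^ 2 * L ^ 2 + D₀ ^ 2) * ‖u‖ ^ 2 := by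
  have hw2 : ‖w‖ ^ 2 ≤ B ^ 2 * ‖p‖ ^ 2 := by
    rw [← mul_pow]; exact pow_le_pow_left₀ (norm_nonneg w) hw 2
  have hDw2 : ‖D w‖ ^ 2 ≤ D₀ ^ 2 * ‖u‖ ^ 2 := by
    rw [← mul_pow]; exact pow_le_pow_left₀ (norm_nonneg _) hDw 2
  nlinarith [mul_le_mul_of_nonneg_left hp (sq_nonneg B)]

end GraphNorm

theorem stmt0_general
    {X Y : Type*} [NormedAddCommGroup X] [InnerProductSpace ℝ X]
    [NormedAddCommGroup Y] [InnerProductSpace ℝ Y]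
    (D : Y →ₗ[ℝ] X) (Q : Submodule ℝ Y) (Pi : ↥Q →ₗ[ℝ] Y)
    (B D₀ E : ℝ) (hE : 0 < E)
    (h2 : ∀ p : Q, ‖Pi p‖ ≤ B * ‖(p : Y)‖)
    (h3 : ∀ p : Q, ‖D (Pi p)‖ ≤ D₀ * ‖D (p : Y)‖)
    (h4 : ∀ p : Q, ⟪D (p : Y), D (Pi p)⟫ ≥ E * ‖D (p : Y)‖ ^ 2)
    (u : X) (L : ℝ) (p : Q) (hDp : D (p : Y) = u)
    (hLp : ‖(p : Y)‖ ^ 2 + ‖D (p : Y)‖ ^ 2 ≤ L ^ 2 * ‖u‖ ^ 2)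
    (F : ℝ) (hF : F = (1 / E) * Real.sqrt (B ^ 2 * L ^ 2 + D₀ ^ 2)) :
    ⟪u, D ((1 / E) • Pi p)⟫ ≥ ‖u‖ ^ 2 ∧
      ‖(1 / E) • Pi p‖ ^ 2 + ‖D ((1 / E) • Pi p)‖ ^ 2 ≤ F ^ 2 * ‖u‖ ^ 2 := by
  subst hDp
  have hp : ‖(p : Y)‖ ^ 2 ≤ L ^ 2 * ‖D (p : Y)‖ ^ 2 := by nlinarith [sq_nonneg ‖D (p : Y)‖]
  have hF2 : F ^ 2 = (1 / E) ^ 2 * (B ^ 2 * L ^ 2 + D₀ ^ 2) := by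
    rw [hF, mul_pow, Real.sq_sqrt (by positivity)]
  refine ⟨?_, ?_⟩
  · rw [map_smul]
    exact sq_norm_le_inner_inv_smul hE (h4 p)
  · rw [sq_norm_add_sq_norm_map_smul, hF2, mul_assoc]
    exact mul_le_mul_of_nonneg_left (sq_norm_add_sq_norm_map_le D (h2 p) (h3 p) hp) (sq_nonneg _)

/-- Abstract form of Proposition 1 ("Divergence lifting of scalar fields"). -/
theorem stmt0
    {X Y : Type*} [NormedAddCommGroup X] [InnerProductSpace ℝ X]
    [NormedAddCommGroup Y] [InnerProductSpace ℝ Y]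
    (D : Y →ₗ[ℝ] X) (Q : Submodule ℝ Y) (Pi : ↥Q →ₗ[ℝ] Y)
    (A B D₀ E : ℝ) (hA : 0 < A) (hB : 0 < B) (hD₀ : 0 < D₀) (hE : 0 < E)
    (h1 : ∀ p : Q, A * ‖(p : Y)‖ ^ 2 ≤ ⟪(p : Y), Pi p⟫)
    (h2 : ∀ p : Q, ‖Pi p‖ ≤ B * ‖(p : Y)‖)
    (h3 : ∀ p : Q, ‖D (Pi p)‖ ≤ D₀ * ‖D (p : Y)‖)
    (h4 : ∀ p : Q, ⟪D (p : Y), D (Pi p)⟫ ≥ E * ‖D (p : Y)‖ ^ 2)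
    (u : X) (L : ℝ) (hL : 0 < L) (p : Q) (hDp : D (p : Y) = u)
    (hLp : ‖(p : Y)‖ ^ 2 + ‖D (p : Y)‖ ^ 2 ≤ L ^ 2 * ‖u‖ ^ 2)
    (F : ℝ) (hF : F = (1 / E) * Real.sqrt (B ^ 2 * L ^ 2 + D₀ ^ 2)) :
    ⟪u, D ((1 / E) • Pi p)⟫ ≥ ‖u‖ ^ 2 ∧
      ‖(1 / E) • Pi p‖ ^ 2 + ‖D ((1 / E) • Pi p)‖ ^ 2 ≤ F ^ 2 * ‖u‖ ^ 2 :=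
  stmt0_general D Q Pi B D₀ E hE h2 h3 h4 u L p hDp hLp F hF
end

section
/- Let X_T ⊆ X be a subspace with D(Q) ⊆ X_T, and let F > 0 be such that for every u ∈ X_T there exists q in the range of Π with ‖q‖² + ‖D q‖² ≤ F²·‖u‖² and ⟨u, D q⟩ ≥ ‖u‖². Let β > 0 satisfy 1 − ((B + 2·D₀)/A)·β − β² ≥ 0 and √(1 − ((B + 2·D₀)/A)·β − β²) ≥ (1 + F·(1 + √((B + 2·D₀)/A)))·√β. Then for every u ∈ X_T and p ∈ Q with ‖u‖² + ‖p‖² + ‖D p‖² = 1, there exist v ∈ X_T and q in the range of Π such that ‖v‖² + ‖q‖² + ‖D q‖² ≤ 1 and ⟨p, q⟩ + ⟨u, D q⟩ + ⟨D p, v⟩ ≥ β. (Abstract form of Proposition 2, 'Discrete stability': the discrete inf-sup condition for the Petrov–Galerkin mixed bilinear form γ((u,p),(v,q)) = (p,q) + (u, div q) + (div p, v).) -/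
open scoped RealInnerProductSpace

/-!
Each of the three pieces `‖D p‖`, `‖u‖`, `‖p‖` of the unit norm of `(u, p)` can be tested
separately. If `‖D p‖ ≥ β`, test with `v = D p`; if `‖u‖` dominates `F (β + ‖p‖)`, test with
the lift `q` of `u`; otherwise both are small, so the choice of `β` forces
`‖p‖² ≥ ((B + 2 D₀) / A) β`, and the coercivity of `Π` makes `q = Π p` a good test function.
In every case the test pair `(v, q)` has `V`-norm at most some `M > 0` and `γ ≥ β M`;
rescaling by `M⁻¹` gives the claim.
-/

section MixedForm

variable {X Y : Type*} [NormedAddCommGroup X] [InnerProductSpace ℝ X]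
  [NormedAddCommGroup Y] [InnerProductSpace ℝ Y] (D : Y →ₗ[ℝ] X)

/-- The Petrov–Galerkin form `γ((u,p),(v,q)) = (p,q) + (u, div q) + (div p, v)`. -/
def mixedForm (u : X) (p : Y) (v : X) (q : Y) : ℝ :=
  ⟪p, q⟫ + ⟪u, D q⟫ + ⟪D p, v⟫

/-- The square of the norm of `V = L² × H(div)`. -/
def normSqV (v : X) (q : Y) : ℝ :=
  ‖v‖ ^ 2 + ‖q‖ ^ 2 + ‖D q‖ ^ 2

variable {D}

lemma mixedForm_smul (u : X) (p : Y) (v : X) (q : Y) (c : ℝ) :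
    mixedForm D u p (c • v) (c • q) = c * mixedForm D u p v q := by
  simp only [mixedForm, map_smul, real_inner_smul_right]
  ring

lemma normSqV_smul (v : X) (q : Y) (c : ℝ) :
    normSqV D (c • v) (c • q) = c ^ 2 * normSqV D v q := by
  simp only [normSqV, map_smul, norm_smul, Real.norm_eq_abs, mul_pow, sq_abs]
  ring

lemma exists_normSqV_le_one_of_le_mul {S : Submodule ℝ X} {T : Submodule ℝ Y}
    {u : X} {p : Y} {v : X} {q : Y} {β M : ℝ} (hv : v ∈ S) (hq : q ∈ T) (hM : 0 < M)
    (hnorm : normSqV D v q ≤ M ^ 2) (hγ : β * M ≤ mixedForm D u p v q) :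
    ∃ v ∈ S, ∃ q ∈ T, normSqV D v q ≤ 1 ∧ β ≤ mixedForm D u p v q := by
  refine ⟨M⁻¹ • v, S.smul_mem _ hv, M⁻¹ • q, T.smul_mem _ hq, ?_, ?_⟩
  · rw [normSqV_smul, inv_pow]
    exact inv_mul_le_one_of_le₀ hnorm (by positivity)
  · rw [mixedForm_smul, le_inv_mul_iff₀ hM, mul_comm]
    exact hγ

lemma normSqV_D_zero (p : Y) : normSqV D (D p) 0 = ‖D p‖ ^ 2 := by
  simp [normSqV]

lemma mixedForm_D_zero (u : X) (p : Y) : mixedForm D u p (D p) 0 = ‖D p‖ ^ 2 := by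
  simp [mixedForm]

lemma mul_le_mixedForm_zero_of_lift {u : X} {p q : Y} {β F : ℝ} (hF : 0 < F)
    (hq : ‖q‖ ^ 2 + ‖D q‖ ^ 2 ≤ F ^ 2 * ‖u‖ ^ 2) (hDq : ‖u‖ ^ 2 ≤ ⟪u, D q⟫)
    (hu : F * (β + ‖p‖) ≤ ‖u‖) :
    β * (F * ‖u‖) ≤ mixedForm D u p 0 q := by
  have hq_le : ‖q‖ ≤ F * ‖u‖ :=
    le_of_pow_le_pow_left₀ two_ne_zero (by positivity)
      (by nlinarith [sq_nonneg ‖D q‖])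
  have hpq : -(‖p‖ * (F * ‖u‖)) ≤ ⟪p, q⟫ := by
    have := neg_le_of_abs_le (abs_real_inner_le_norm p q)
    nlinarith [mul_le_mul_of_nonneg_left hq_le (norm_nonneg p)]
  simp only [mixedForm, inner_zero_right, add_zero]
  nlinarith [mul_le_mul_of_nonneg_right hu (norm_nonneg u)]

lemma normSqV_zero_le_sq {p r : Y} {B D₀ : ℝ} (hB : 0 ≤ B) (hD₀ : 0 ≤ D₀)
    (hr : ‖r‖ ≤ B * ‖p‖) (hDr : ‖D r‖ ≤ D₀ * ‖D p‖) :
    normSqV D 0 r ≤ (B * ‖p‖ + D₀ * ‖D p‖) ^ 2 := by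
  have hr2 := pow_le_pow_left₀ (norm_nonneg r) hr 2
  have hDr2 := pow_le_pow_left₀ (norm_nonneg (D r)) hDr 2
  simp only [normSqV, norm_zero]
  nlinarith [mul_nonneg (mul_nonneg hB (norm_nonneg p)) (mul_nonneg hD₀ (norm_nonneg (D p)))]

lemma mul_le_mixedForm_zero_of_coercive {u : X} {p r : Y} {A B D₀ β : ℝ}
    (hB : 0 ≤ B) (hD₀ : 0 ≤ D₀) (hcoer : A * ‖p‖ ^ 2 ≤ ⟪p, r⟫) (hDr : ‖D r‖ ≤ D₀ * ‖D p‖)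
    (hp : (B + 2 * D₀) * β ≤ A * ‖p‖ ^ 2) (hu1 : ‖u‖ ≤ 1) (hp1 : ‖p‖ ≤ 1)
    (hDp : ‖D p‖ ≤ β) (hβ1 : β ≤ 1) :
    β * (B * ‖p‖ + D₀ * ‖D p‖) ≤ mixedForm D u p 0 r := by
  have huDr : -(‖u‖ * (D₀ * ‖D p‖)) ≤ ⟪u, D r⟫ := by
    have := neg_le_of_abs_le (abs_real_inner_le_norm u (D r))
    nlinarith [mul_le_mul_of_nonneg_left hDr (norm_nonneg u)]
  have hβ : 0 ≤ β := (norm_nonneg _).trans hDp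
  have h₁ : β * (B * ‖p‖) ≤ B * β := by nlinarith [mul_nonneg hB hβ]
  have h₂ : β * (D₀ * ‖D p‖) ≤ D₀ * β := by nlinarith [mul_nonneg hD₀ (norm_nonneg (D p))]
  have h₃ : ‖u‖ * (D₀ * ‖D p‖) ≤ D₀ * β := by
    nlinarith [mul_nonneg hD₀ (norm_nonneg u), mul_nonneg hD₀ hβ]
  simp only [mixedForm, inner_zero_right, add_zero]
  nlinarith

end MixedForm

/-- Here `(a, b, c)` stands for `(‖u‖, ‖p‖, ‖D p‖)` and `C` for `(B + 2 D₀) / A`; this is where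
the two conditions on `β` enter. -/
lemma mul_le_sq_of_sq_add_sq_add_sq_eq_one {a b c C F β : ℝ} (ha : 0 ≤ a) (hc : 0 ≤ c)
    (hC : 0 ≤ C) (hF : 0 ≤ F) (hβ : 0 < β) (hβ1 : 0 ≤ 1 - C * β - β ^ 2)
    (hβ2 : (1 + F * (1 + √C)) * √β ≤ √(1 - C * β - β ^ 2))
    (habc : a ^ 2 + b ^ 2 + c ^ 2 = 1) (hcβ : c < β) (haβ : a < F * (β + b)) :
    C * β ≤ b ^ 2 := by
  by_contra! hb2
  set g := √C
  set s := √β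
  have hg2 : g ^ 2 = C := Real.sq_sqrt hC
  have hs2 : s ^ 2 = β := Real.sq_sqrt hβ.le
  have hβs : β ≤ s := by
    have : β ≤ 1 := by nlinarith [mul_nonneg hC hβ.le]
    rw [← hs2]; nlinarith [Real.sqrt_nonneg β]
  have hmargin : (1 + F * (1 + g)) ^ 2 * β + C * β + β ^ 2 ≤ 1 := by
    have := pow_le_pow_left₀ (by positivity) hβ2 2
    rw [Real.sq_sqrt hβ1, mul_pow, hs2] at this
    linarith
  have hb_lt : b < g * s := by
    apply lt_of_pow_lt_pow_left₀ 2 (by positivity)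
    rwa [mul_pow, hg2, hs2]
  have ha_lt : a < F * (1 + g) * s := by
    nlinarith [mul_le_mul_of_nonneg_left (add_le_add hβs hb_lt.le) hF]
  have ha2 : a ^ 2 < (F * (1 + g)) ^ 2 * β := by
    rw [← hs2, ← mul_pow]; exact pow_lt_pow_left₀ ha_lt ha two_ne_zero
  have hc2 : c ^ 2 < β ^ 2 := pow_lt_pow_left₀ hcβ hc two_ne_zero
  nlinarith [mul_nonneg (mul_nonneg hF (by positivity : (0 : ℝ) ≤ 1 + g)) hβ.le]

theorem stmt1_general
    {X Y : Type*} [NormedAddCommGroup X] [InnerProductSpace ℝ X]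
    [NormedAddCommGroup Y] [InnerProductSpace ℝ Y]
    (D : Y →ₗ[ℝ] X) (Q : Submodule ℝ Y) (Pi : ↥Q →ₗ[ℝ] Y)
    (A B D₀ : ℝ) (hA : 0 < A) (hB : 0 < B) (hD₀ : 0 < D₀)
    (h1 : ∀ p : Q, A * ‖(p : Y)‖ ^ 2 ≤ ⟪(p : Y), Pi p⟫)
    (h2 : ∀ p : Q, ‖Pi p‖ ≤ B * ‖(p : Y)‖)
    (h3 : ∀ p : Q, ‖D (Pi p)‖ ≤ D₀ * ‖D (p : Y)‖)
    (XT : Submodule ℝ X) (hDQ : ∀ p : Q, D (p : Y) ∈ XT)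
    (F : ℝ) (hF : 0 < F)
    (hlift : ∀ u ∈ XT, ∃ q ∈ LinearMap.range Pi,
      ‖q‖ ^ 2 + ‖D q‖ ^ 2 ≤ F ^ 2 * ‖u‖ ^ 2 ∧ ⟪u, D q⟫ ≥ ‖u‖ ^ 2)
    (β : ℝ) (hβ : 0 < β)
    (hβ1 : 1 - ((B + 2 * D₀) / A) * β - β ^ 2 ≥ 0)
    (hβ2 : Real.sqrt (1 - ((B + 2 * D₀) / A) * β - β ^ 2) ≥
      (1 + F * (1 + Real.sqrt ((B + 2 * D₀) / A))) * Real.sqrt β)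
    (u : X) (hu : u ∈ XT) (p : Q)
    (hnorm : ‖u‖ ^ 2 + ‖(p : Y)‖ ^ 2 + ‖D (p : Y)‖ ^ 2 = 1) :
    ∃ v ∈ XT, ∃ q ∈ LinearMap.range Pi,
      ‖v‖ ^ 2 + ‖q‖ ^ 2 + ‖D q‖ ^ 2 ≤ 1 ∧
      ⟪(p : Y), q⟫ + ⟪u, D q⟫ + ⟪D (p : Y), v⟫ ≥ β := by
  by_cases hDp : β ≤ ‖D (p : Y)‖
  · refine exists_normSqV_le_one_of_le_mul (hDQ p) (zero_mem _) (hβ.trans_le hDp)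
      (normSqV_D_zero _).le ?_
    rw [mixedForm_D_zero, sq]
    exact mul_le_mul_of_nonneg_right hDp (norm_nonneg _)
  by_cases hup : F * (β + ‖(p : Y)‖) ≤ ‖u‖
  · obtain ⟨q, hq, hq_norm, hDq⟩ := hlift u hu
    have hu_pos : 0 < ‖u‖ := lt_of_lt_of_le (by positivity) hup
    exact exists_normSqV_le_one_of_le_mul (zero_mem _) hq (by positivity)
      (by simpa [normSqV, mul_pow, add_assoc] using hq_norm)
      (mul_le_mixedForm_zero_of_lift hF hq_norm hDq hup)
  push Not at hDp hup
  have hC : 0 < (B + 2 * D₀) / A := by positivity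
  have hp : (B + 2 * D₀) / A * β ≤ ‖(p : Y)‖ ^ 2 :=
    mul_le_sq_of_sq_add_sq_add_sq_eq_one (norm_nonneg _) (norm_nonneg _)
      hC.le hF.le hβ hβ1 hβ2 hnorm hDp hup
  have hp_pos : 0 < ‖(p : Y)‖ := by nlinarith [mul_pos hC hβ, norm_nonneg (p : Y)]
  exact exists_normSqV_le_one_of_le_mul (zero_mem _) (LinearMap.mem_range_self Pi p)
    (by positivity) (normSqV_zero_le_sq hB.le hD₀.le (h2 p) (h3 p))
    (mul_le_mixedForm_zero_of_coercive hB.le hD₀.le (h1 p) (h3 p)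
      (by rwa [div_mul_eq_mul_div, div_le_iff₀' hA] at hp)
      (by nlinarith [norm_nonneg (D (p : Y))]) (by nlinarith [norm_nonneg u])
      hDp.le (by nlinarith [mul_pos hC hβ]))

/-- Abstract form of Proposition 2 ("Discrete stability"): the discrete inf-sup
condition for the Petrov–Galerkin mixed bilinear form
`γ((u,p),(v,q)) = (p,q) + (u, div q) + (div p, v)`. -/
theorem stmt1
    {X Y : Type*} [NormedAddCommGroup X] [InnerProductSpace ℝ X]
    [NormedAddCommGroup Y] [InnerProductSpace ℝ Y]
    (D : Y →ₗ[ℝ] X) (Q : Submodule ℝ Y) (Pi : ↥Q →ₗ[ℝ] Y)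
    (A B D₀ E : ℝ) (hA : 0 < A) (hB : 0 < B) (hD₀ : 0 < D₀) (hE : 0 < E)
    (h1 : ∀ p : Q, A * ‖(p : Y)‖ ^ 2 ≤ ⟪(p : Y), Pi p⟫)
    (h2 : ∀ p : Q, ‖Pi p‖ ≤ B * ‖(p : Y)‖)
    (h3 : ∀ p : Q, ‖D (Pi p)‖ ≤ D₀ * ‖D (p : Y)‖)
    (h4 : ∀ p : Q, ⟪D (p : Y), D (Pi p)⟫ ≥ E * ‖D (p : Y)‖ ^ 2)
    (XT : Submodule ℝ X) (hDQ : ∀ p : Q, D (p : Y) ∈ XT)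
    (F : ℝ) (hF : 0 < F)
    (hlift : ∀ u ∈ XT, ∃ q ∈ LinearMap.range Pi,
      ‖q‖ ^ 2 + ‖D q‖ ^ 2 ≤ F ^ 2 * ‖u‖ ^ 2 ∧ ⟪u, D q⟫ ≥ ‖u‖ ^ 2)
    (β : ℝ) (hβ : 0 < β)
    (hβ1 : 1 - ((B + 2 * D₀) / A) * β - β ^ 2 ≥ 0)
    (hβ2 : Real.sqrt (1 - ((B + 2 * D₀) / A) * β - β ^ 2) ≥
      (1 + F * (1 + Real.sqrt ((B + 2 * D₀) / A))) * Real.sqrt β)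
    (u : X) (hu : u ∈ XT) (p : Q)
    (hnorm : ‖u‖ ^ 2 + ‖(p : Y)‖ ^ 2 + ‖D (p : Y)‖ ^ 2 = 1) :
    ∃ v ∈ XT, ∃ q ∈ LinearMap.range Pi,
      ‖v‖ ^ 2 + ‖q‖ ^ 2 + ‖D q‖ ^ 2 ≤ 1 ∧
      ⟪(p : Y), q⟫ + ⟪u, D q⟫ + ⟪D (p : Y), v⟫ ≥ β :=
  stmt1_general D Q Pi A B D₀ hA hB hD₀ h1 h2 h3 XT hDQ F hF hlift β hβ hβ1 hβ2 u hu p hnorm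
end

section
/- Let N, E, A ∈ ℝ² be affinely independent, M = conv{N, E, A}, G = (N + E + A)/3 its centroid. Let τ = (N − E)/‖N − E‖ and let n be the unit vector orthogonal to N − E with ⟨n, A − E⟩ > 0. Let φ be a C¹ vector field on a neighborhood of M whose divergence (trace of the derivative) is constant on M, and whose normal trace vanishes on the segments [N, A] and [E, A] (i.e. ⟨φ(x), ν⟩ = 0 for all x in the segment, ν a unit normal of the segment). Set α = ∫₀^{‖N−E‖} ⟨φ(E + s·τ), n⟩ ds and α₁ = ∫₀^{‖N−E‖} s·⟨φ(E + s·τ), n⟩ ds. Then ∫_M φ(x) dx = −(α₁·τ + α·(E − G)). (Key divergence identity established in the proof of Lemma 2.) -/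
/-!
Since `div (xᵢ φ) = c xᵢ + φᵢ`, the divergence theorem applied to `φ` and to the fields `xᵢ φ`
expresses `c |M|` and `c |M| Gᵢ + ∫_M φᵢ` through boundary fluxes. The normal trace vanishes on
`[N, A]` and `[E, A]`, so only the edge `EN` (outer normal `-n`) contributes: `c |M| = -α` and
`c |M| G + ∫_M φ = -(α E + α₁ τ)`.

The divergence theorem is proved on the unit triangle `{p, q ≥ 0, p + q ≤ 1}` by Fubini and the
fundamental theorem of calculus, and transported to `M` along `(p, q) ↦ E + p (N - E) + q (A - E)`,
writing `φ` in the basis `N - E, A - E`; the divergence is invariant since the trace is.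
-/

open MeasureTheory Set
open scoped RealInnerProductSpace

local notation "ℝ²" => EuclideanSpace ℝ (Fin 2)

def unitTriangle : Set (ℝ × ℝ) := {y | 0 ≤ y.1 ∧ 0 ≤ y.2 ∧ y.1 + y.2 ≤ 1}

lemma unitTriangle_eq_convexHull :
    unitTriangle = convexHull ℝ {((0 : ℝ), (0 : ℝ)), (1, 0), (0, 1)} := by
  apply Subset.antisymm
  · rintro ⟨p, q⟩ ⟨hp, hq, hpq⟩
    have key := (convex_convexHull ℝ
      ({((0 : ℝ), (0 : ℝ)), (1, 0), (0, 1)} : Set (ℝ × ℝ))).sum_mem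
      (t := Finset.univ) (w := ![1 - p - q, p, q]) (z := ![(0, 0), (1, 0), (0, 1)])
      (by intro i _; fin_cases i <;> simp <;> linarith)
      (by simp [Fin.sum_univ_three]; ring)
      (by intro i _; fin_cases i <;> exact subset_convexHull ℝ _ (by simp))
    simpa [Fin.sum_univ_three, Prod.ext_iff] using key
  · refine convexHull_min (by simp [insert_subset_iff, unitTriangle]) ?_
    rintro ⟨a₁, a₂⟩ ⟨ha₁, ha₂, ha⟩ ⟨b₁, b₂⟩ ⟨hb₁, hb₂, hb⟩ s t hs ht hst
    refine ⟨?_, ?_, ?_⟩ <;> simp only [Prod.smul_mk, Prod.mk_add_mk, smul_eq_mul] <;> nlinarith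

lemma isCompact_unitTriangle : IsCompact unitTriangle := by
  rw [unitTriangle_eq_convexHull]
  exact (toFinite _).isCompact_convexHull ℝ

lemma measurableSet_unitTriangle : MeasurableSet unitTriangle :=
  isCompact_unitTriangle.isClosed.measurableSet

lemma preimage_swap_unitTriangle : Prod.swap ⁻¹' unitTriangle = unitTriangle := by
  ext ⟨p, q⟩
  simp only [unitTriangle, mem_preimage, Prod.fst_swap, Prod.snd_swap, mem_ofPred_eq, add_comm q]
  tauto

lemma swap_mem_unitTriangle {y : ℝ × ℝ} : y.swap ∈ unitTriangle ↔ y ∈ unitTriangle :=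
  Set.ext_iff.1 preimage_swap_unitTriangle y

lemma mk_mem_unitTriangle_of_mem_uIcc {p q : ℝ} (hp : p ∈ uIcc 0 1) (hq : q ∈ uIcc 0 (1 - p)) :
    (p, q) ∈ unitTriangle := by
  rw [uIcc_of_le zero_le_one] at hp
  rw [uIcc_of_le (by linarith [hp.2])] at hq
  exact ⟨hp.1, hq.1, by linarith [hq.2]⟩

lemma unitTriangle_indicator_apply (F : ℝ × ℝ → ℝ) (p q : ℝ) :
    unitTriangle.indicator F (p, q)
      = (Icc 0 1).indicator (fun p => (Icc 0 (1 - p)).indicator (fun q => F (p, q)) q) p := by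
  simp only [indicator_apply, unitTriangle, mem_ofPred_eq, mem_Icc]
  split_ifs <;> first | rfl | grind

lemma setIntegral_unitTriangle_eq_iterated {F : ℝ × ℝ → ℝ} (hF : ContinuousOn F unitTriangle) :
    ∫ y in unitTriangle, F y = ∫ p in (0 : ℝ)..1, ∫ q in (0 : ℝ)..(1 - p), F (p, q) := by
  have hint : Integrable (unitTriangle.indicator F) :=
    (hF.integrableOn_compact isCompact_unitTriangle).integrable_indicator
      measurableSet_unitTriangle
  rw [← integral_indicator measurableSet_unitTriangle, Measure.volume_eq_prod,
    integral_prod _ (by rwa [← Measure.volume_eq_prod])]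
  have hslice : ∀ p, ∫ q, unitTriangle.indicator F (p, q)
      = (Icc 0 1).indicator (fun p => ∫ q in (0 : ℝ)..(1 - p), F (p, q)) p := by
    intro p
    simp_rw [unitTriangle_indicator_apply]
    by_cases hp : p ∈ Icc (0 : ℝ) 1
    · simp only [indicator_of_mem hp]
      rw [integral_indicator measurableSet_Icc, integral_Icc_eq_integral_Ioc,
        ← intervalIntegral.integral_of_le (by linarith [hp.2])]
    · simp [indicator_of_notMem hp]
  simp_rw [hslice]
  rw [integral_indicator measurableSet_Icc, integral_Icc_eq_integral_Ioc,
    ← intervalIntegral.integral_of_le zero_le_one]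

lemma setIntegral_unitTriangle_swap (F : ℝ × ℝ → ℝ) :
    ∫ y in unitTriangle, F y.swap = ∫ y in unitTriangle, F y := by
  have h := (Measure.measurePreserving_swap (μ := (volume : Measure ℝ)) (ν := volume))
    |>.setIntegral_preimage_emb MeasurableEquiv.prodComm.measurableEmbedding F unitTriangle
  rwa [preimage_swap_unitTriangle, ← Measure.volume_eq_prod] at h

lemma setIntegral_unitTriangle_eq_iterated' {F : ℝ × ℝ → ℝ} (hF : ContinuousOn F unitTriangle) :
    ∫ y in unitTriangle, F y = ∫ q in (0 : ℝ)..1, ∫ p in (0 : ℝ)..(1 - q), F (p, q) := by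
  rw [← setIntegral_unitTriangle_swap, setIntegral_unitTriangle_eq_iterated]
  · rfl
  · refine hF.comp continuous_swap.continuousOn fun y hy => ?_
    rwa [← preimage_swap_unitTriangle] at hy

lemma measureReal_unitTriangle : volume.real unitTriangle = 1 / 2 := by
  simpa [intervalIntegral.integral_comp_sub_left fun p => p] using
    setIntegral_unitTriangle_eq_iterated (F := fun _ => (1 : ℝ)) continuousOn_const

lemma setIntegral_unitTriangle_fst : ∫ y in unitTriangle, y.1 = 1 / 6 := by
  rw [setIntegral_unitTriangle_eq_iterated continuous_fst.continuousOn]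
  simp only [intervalIntegral.integral_const, smul_eq_mul, sub_zero, sub_mul, one_mul]
  rw [intervalIntegral.integral_sub intervalIntegral.intervalIntegrable_id
    (Continuous.intervalIntegrable (by fun_prop) _ _)]
  simp [← sq]
  norm_num

lemma setIntegral_unitTriangle_snd : ∫ y in unitTriangle, y.2 = 1 / 6 := by
  rw [← setIntegral_unitTriangle_fst, ← setIntegral_unitTriangle_swap]
  rfl

theorem integral_fderiv_apply_comp_eq_sub {E : Type*} [NormedAddCommGroup E] [NormedSpace ℝ E]
    {v : E → ℝ} {V : Set E} (hV : IsOpen V) (hv : ContDiffOn ℝ 1 v V) {γ : ℝ → E} {d : E}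
    (hγ : ∀ s, HasDerivAt γ d s) {a b : ℝ} (hγV : ∀ s ∈ uIcc a b, γ s ∈ V) :
    ∫ s in a..b, fderiv ℝ v (γ s) d = v (γ b) - v (γ a) := by
  have hγc : Continuous γ := continuous_iff_continuousAt.2 fun s => (hγ s).continuousAt
  refine intervalIntegral.integral_eq_sub_of_hasDerivAt (f := fun s => v (γ s))
    (fun s hs => ?_) ?_
  · have hvd := (hv.differentiableOn one_ne_zero).differentiableAt (hV.mem_nhds (hγV s hs))
    exact hvd.hasFDerivAt.comp_hasDerivAt s (hγ s)
  · have : ContinuousOn (fun s => fderiv ℝ v (γ s) d) (uIcc a b) :=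
      ((hv.continuousOn_fderiv_of_isOpen hV le_rfl).comp hγc.continuousOn hγV).clm_apply
        continuousOn_const
    exact this.intervalIntegrable

lemma trace_eq_fst_add_snd (f : (ℝ × ℝ) →ₗ[ℝ] ℝ × ℝ) :
    LinearMap.trace ℝ (ℝ × ℝ) f = (f (1, 0)).1 + (f (0, 1)).2 := by
  rw [LinearMap.trace_eq_matrix_trace ℝ (Module.Basis.finTwoProd ℝ), Matrix.trace_fin_two]
  simp [LinearMap.toMatrix_apply]

theorem trace_fderiv_smul {𝕜 E : Type*} [NontriviallyNormedField 𝕜] [NormedAddCommGroup E]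
    [NormedSpace 𝕜 E] [FiniteDimensional 𝕜 E] {ψ : E → 𝕜} {g : E → E} {y : E}
    (hψ : DifferentiableAt 𝕜 ψ y) (hg : DifferentiableAt 𝕜 g y) :
    LinearMap.trace 𝕜 E (fderiv 𝕜 (fun y => ψ y • g y) y)
      = ψ y * LinearMap.trace 𝕜 E (fderiv 𝕜 g y) + fderiv 𝕜 ψ y (g y) := by
  rw [fderiv_fun_smul hψ hg, ContinuousLinearMap.toLinearMap_add, map_add,
    ContinuousLinearMap.toLinearMap_smul, map_smul, smul_eq_mul]
  congr 1
  exact LinearMap.trace_smulRight _ _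

theorem trace_fderiv_conj {𝕜 E F : Type*} [NontriviallyNormedField 𝕜] [NormedAddCommGroup E]
    [NormedSpace 𝕜 E] [NormedAddCommGroup F] [NormedSpace 𝕜 F] (e : F ≃L[𝕜] E) {φ : E → E}
    (x₀ : E) {y : F} (hφ : DifferentiableAt 𝕜 φ (x₀ + e y)) :
    LinearMap.trace 𝕜 F (fderiv 𝕜 (fun y => e.symm (φ (x₀ + e y))) y)
      = LinearMap.trace 𝕜 E (fderiv 𝕜 φ (x₀ + e y)) := by
  have hd : HasFDerivAt (fun y => e.symm (φ (x₀ + e y)))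
      ((e.symm : E →L[𝕜] F).comp ((fderiv 𝕜 φ (x₀ + e y)).comp (e : F →L[𝕜] E))) y :=
    e.symm.hasFDerivAt.comp y (hφ.hasFDerivAt.comp y (e.hasFDerivAt.const_add x₀))
  rw [hd.fderiv, ← LinearMap.trace_conj' _ (e.symm : E ≃ₗ[𝕜] F)]
  rfl

section DivergenceTheorem

variable {V : Set (ℝ × ℝ)}

lemma setIntegral_unitTriangle_fderiv_apply_fst (hV : IsOpen V) (hΔV : unitTriangle ⊆ V)
    {u : ℝ × ℝ → ℝ} (hu : ContDiffOn ℝ 1 u V) :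
    ∫ y in unitTriangle, fderiv ℝ u y (1, 0) = ∫ t in (0 : ℝ)..1, (u (1 - t, t) - u (0, t)) := by
  rw [setIntegral_unitTriangle_eq_iterated'
    (((hu.continuousOn_fderiv_of_isOpen hV le_rfl).clm_apply continuousOn_const).mono hΔV)]
  refine intervalIntegral.integral_congr fun q hq => ?_
  refine integral_fderiv_apply_comp_eq_sub hV hu
    (fun p => (hasDerivAt_id p).prodMk (hasDerivAt_const p q)) fun p hp => hΔV ?_
  exact swap_mem_unitTriangle.1 (mk_mem_unitTriangle_of_mem_uIcc hq hp)

lemma setIntegral_unitTriangle_fderiv_apply_snd (hV : IsOpen V) (hΔV : unitTriangle ⊆ V)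
    {v : ℝ × ℝ → ℝ} (hv : ContDiffOn ℝ 1 v V) :
    ∫ y in unitTriangle, fderiv ℝ v y (0, 1) = ∫ t in (0 : ℝ)..1, (v (t, 1 - t) - v (t, 0)) := by
  rw [setIntegral_unitTriangle_eq_iterated
    (((hv.continuousOn_fderiv_of_isOpen hV le_rfl).clm_apply continuousOn_const).mono hΔV)]
  refine intervalIntegral.integral_congr fun p hp => ?_
  exact integral_fderiv_apply_comp_eq_sub hV hv
    (fun q => (hasDerivAt_const q p).prodMk (hasDerivAt_id q))
    fun q hq => hΔV (mk_mem_unitTriangle_of_mem_uIcc hp hq)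

theorem setIntegral_unitTriangle_trace_fderiv (hV : IsOpen V) (hΔV : unitTriangle ⊆ V)
    {g : ℝ × ℝ → ℝ × ℝ} (hg : ContDiffOn ℝ 1 g V) :
    ∫ y in unitTriangle, LinearMap.trace ℝ (ℝ × ℝ) (fderiv ℝ g y)
      = (∫ t in (0 : ℝ)..1, ((g (1 - t, t)).1 + (g (1 - t, t)).2))
        - (∫ t in (0 : ℝ)..1, (g (0, t)).1) - ∫ t in (0 : ℝ)..1, (g (t, 0)).2 := by
  have hg₁ : ContDiffOn ℝ 1 (fun y => (g y).1) V := contDiff_fst.comp_contDiffOn hg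
  have hg₂ : ContDiffOn ℝ 1 (fun y => (g y).2) V := contDiff_snd.comp_contDiffOn hg
  have htrace : ∀ y ∈ unitTriangle, LinearMap.trace ℝ (ℝ × ℝ) (fderiv ℝ g y)
      = fderiv ℝ (fun y => (g y).1) y (1, 0) + fderiv ℝ (fun y => (g y).2) y (0, 1) := by
    intro y hy
    have hd := ((hg.differentiableOn one_ne_zero).differentiableAt
      (hV.mem_nhds (hΔV hy))).hasFDerivAt
    rw [hd.fst.fderiv, hd.snd.fderiv, trace_eq_fst_add_snd]
    rfl
  have hint : ∀ {f : ℝ × ℝ → ℝ}, ContDiffOn ℝ 1 f V → ∀ d : ℝ × ℝ,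
      IntegrableOn (fun y => fderiv ℝ f y d) unitTriangle := fun hf d =>
    (((hf.continuousOn_fderiv_of_isOpen hV le_rfl).clm_apply continuousOn_const).mono
      hΔV).integrableOn_compact isCompact_unitTriangle
  rw [setIntegral_congr_fun measurableSet_unitTriangle htrace,
    integral_add (hint hg₁ _) (hint hg₂ _), setIntegral_unitTriangle_fderiv_apply_fst hV hΔV hg₁,
    setIntegral_unitTriangle_fderiv_apply_snd hV hΔV hg₂]
  have hedge : ∀ {f : ℝ × ℝ → ℝ}, ContDiffOn ℝ 1 f V → ∀ {γ : ℝ → ℝ × ℝ}, Continuous γ →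
      (∀ t ∈ uIcc (0 : ℝ) 1, γ t ∈ unitTriangle) →
      IntervalIntegrable (fun t => f (γ t)) volume 0 1 := fun hf _ hγ hγΔ =>
    (hf.continuousOn.comp hγ.continuousOn fun t ht => hΔV (hγΔ t ht)).intervalIntegrable
  have hhyp : ∀ t ∈ uIcc (0 : ℝ) 1, (1 - t, t) ∈ unitTriangle := fun t ht =>
    swap_mem_unitTriangle.1 (mk_mem_unitTriangle_of_mem_uIcc ht (by simp))
  have hhyp' : ∀ t ∈ uIcc (0 : ℝ) 1, (t, 1 - t) ∈ unitTriangle := fun t ht =>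
    mk_mem_unitTriangle_of_mem_uIcc ht right_mem_uIcc
  have hleft : ∀ t ∈ uIcc (0 : ℝ) 1, (0, t) ∈ unitTriangle := fun t ht =>
    mk_mem_unitTriangle_of_mem_uIcc left_mem_uIcc (by simpa using ht)
  have hbot : ∀ t ∈ uIcc (0 : ℝ) 1, (t, 0) ∈ unitTriangle := fun t ht =>
    mk_mem_unitTriangle_of_mem_uIcc ht left_mem_uIcc
  have hflip : ∫ t in (0 : ℝ)..1, (g (t, 1 - t)).2 = ∫ t in (0 : ℝ)..1, (g (1 - t, t)).2 := by
    simpa using intervalIntegral.integral_comp_sub_left (fun t => (g (1 - t, t)).2) (1 : ℝ)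
      (a := 0) (b := 1)
  have hc : Continuous fun t : ℝ => (1 - t, t) := by fun_prop
  rw [intervalIntegral.integral_sub (hedge hg₁ hc hhyp) (hedge hg₁ (by fun_prop) hleft),
    intervalIntegral.integral_sub (hedge hg₂ (by fun_prop) hhyp') (hedge hg₂ (by fun_prop) hbot),
    hflip, intervalIntegral.integral_add (hedge hg₁ hc hhyp) (hedge hg₂ hc hhyp)]
  ring

lemma setIntegral_unitTriangle_weighted (hV : IsOpen V) (hΔV : unitTriangle ⊆ V)
    {g : ℝ × ℝ → ℝ × ℝ} (hg : ContDiffOn ℝ 1 g V) {c : ℝ}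
    (hdiv : ∀ y ∈ unitTriangle, LinearMap.trace ℝ (ℝ × ℝ) (fderiv ℝ g y) = c)
    (hleft : ∀ t ∈ Icc (0 : ℝ) 1, (g (0, t)).1 = 0)
    (hhyp : ∀ t ∈ Icc (0 : ℝ) 1, (g (1 - t, t)).1 + (g (1 - t, t)).2 = 0)
    {ψ : ℝ × ℝ → ℝ} (hψ : ContDiff ℝ 1 ψ) :
    c * (∫ y in unitTriangle, ψ y) + ∫ y in unitTriangle, fderiv ℝ ψ y (g y)
      = -∫ t in (0 : ℝ)..1, ψ (t, 0) * (g (t, 0)).2 := by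
  have hdiff : ∀ y ∈ unitTriangle, DifferentiableAt ℝ g y := fun y hy =>
    (hg.differentiableOn one_ne_zero).differentiableAt (hV.mem_nhds (hΔV hy))
  have hψint : IntegrableOn ψ unitTriangle :=
    hψ.continuous.continuousOn.integrableOn_compact isCompact_unitTriangle
  have hDψint : IntegrableOn (fun y => fderiv ℝ ψ y (g y)) unitTriangle :=
    ((hψ.continuous_fderiv one_ne_zero).continuousOn.clm_apply
      (hg.continuousOn.mono hΔV)).integrableOn_compact isCompact_unitTriangle
  have key := setIntegral_unitTriangle_trace_fderiv hV hΔV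
    (show ContDiffOn ℝ 1 (fun y => ψ y • g y) V from hψ.contDiffOn.smul hg)
  rw [setIntegral_congr_fun measurableSet_unitTriangle fun y hy => by
      rw [trace_fderiv_smul (hψ.differentiable one_ne_zero y) (hdiff y hy), hdiv y hy, mul_comm],
    integral_add (hψint.const_mul c) hDψint, integral_const_mul] at key
  have hIcc : uIcc (0 : ℝ) 1 = Icc 0 1 := uIcc_of_le zero_le_one
  have hhyp0 : ∫ t in (0 : ℝ)..1,
      ((ψ (1 - t, t) • g (1 - t, t)).1 + (ψ (1 - t, t) • g (1 - t, t)).2) = 0 := by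
    rw [intervalIntegral.integral_congr (g := fun _ => 0) fun t ht => ?_,
      intervalIntegral.integral_zero]
    simp [← mul_add, hhyp t (hIcc ▸ ht)]
  have hleft0 : ∫ t in (0 : ℝ)..1, (ψ (0, t) • g (0, t)).1 = 0 := by
    rw [intervalIntegral.integral_congr (g := fun _ => 0) fun t ht => ?_,
      intervalIntegral.integral_zero]
    simp [hleft t (hIcc ▸ ht)]
  rw [key, hhyp0, hleft0]
  simp

theorem setIntegral_unitTriangle_of_trace_fderiv_eq_const (hV : IsOpen V)
    (hΔV : unitTriangle ⊆ V) {g : ℝ × ℝ → ℝ × ℝ} (hg : ContDiffOn ℝ 1 g V) {c : ℝ}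
    (hdiv : ∀ y ∈ unitTriangle, LinearMap.trace ℝ (ℝ × ℝ) (fderiv ℝ g y) = c)
    (hleft : ∀ t ∈ Icc (0 : ℝ) 1, (g (0, t)).1 = 0)
    (hhyp : ∀ t ∈ Icc (0 : ℝ) 1, (g (1 - t, t)).1 + (g (1 - t, t)).2 = 0) :
    ∫ y in unitTriangle, g y
      = ((∫ t in (0 : ℝ)..1, (g (t, 0)).2) / 3 - ∫ t in (0 : ℝ)..1, t * (g (t, 0)).2,
          (∫ t in (0 : ℝ)..1, (g (t, 0)).2) / 3) := by
  have hgint : Integrable g (volume.restrict unitTriangle) :=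
    (hg.continuousOn.mono hΔV).integrableOn_compact isCompact_unitTriangle
  -- with `β`, `β₁` the two edge integrals, the weights `1`, `y.1`, `y.2` give `c / 2 = -β`,
  -- `c / 6 + ∫ g₁ = -β₁` and `c / 6 + ∫ g₂ = 0`
  have hone := setIntegral_unitTriangle_weighted hV hΔV hg hdiv hleft hhyp (ψ := fun _ => 1)
    contDiff_const
  have hfst := setIntegral_unitTriangle_weighted hV hΔV hg hdiv hleft hhyp contDiff_fst
  have hsnd := setIntegral_unitTriangle_weighted hV hΔV hg hdiv hleft hhyp contDiff_snd
  simp only [setIntegral_const, measureReal_unitTriangle, smul_eq_mul, mul_one, fderiv_fun_const,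
    Pi.zero_apply, zero_apply, integral_zero, add_zero, one_mul,
    setIntegral_unitTriangle_fst, setIntegral_unitTriangle_snd, fderiv_fst, fderiv_snd,
    ContinuousLinearMap.coe_fst', ContinuousLinearMap.coe_snd', zero_mul,
    intervalIntegral.integral_zero, neg_zero] at hone hfst hsnd
  ext
  · rw [fst_integral hgint]; dsimp only; linarith
  · rw [snd_integral hgint]; dsimp only; linarith

end DivergenceTheorem

def wedge (a b : ℝ²) : ℝ := a 0 * b 1 - a 1 * b 0

lemma real_inner_eq_fin_two (x y : ℝ²) : ⟪x, y⟫ = x 0 * y 0 + x 1 * y 1 := by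
  simp [PiLp.inner_apply, Fin.sum_univ_two, mul_comm]

lemma norm_sq_eq_fin_two (x : ℝ²) : ‖x‖ ^ 2 = x 0 ^ 2 + x 1 ^ 2 := by
  rw [← real_inner_self_eq_norm_sq, real_inner_eq_fin_two]; ring

lemma wedge_swap (a b : ℝ²) : wedge b a = -wedge a b := by
  simp only [wedge]; ring

lemma wedge_self (a : ℝ²) : wedge a a = 0 := by
  simp only [wedge]; ring

lemma wedge_smul_add_smul (a u v : ℝ²) (p q : ℝ) :
    wedge a (p • u + q • v) = p * wedge a u + q * wedge a v := by
  simp only [wedge, PiLp.add_apply, PiLp.smul_apply, smul_eq_mul]; ring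

lemma abs_wedge_eq_norm_mul_abs_inner {n a : ℝ²} (hn : ‖n‖ = 1) (hna : ⟪n, a⟫ = 0) (b : ℝ²) :
    |wedge a b| = ‖a‖ * |⟪n, b⟫| := by
  rw [real_inner_eq_fin_two] at hna
  have hn' : n 0 ^ 2 + n 1 ^ 2 = 1 := by rw [← norm_sq_eq_fin_two, hn, one_pow]
  have hwedge : wedge a b = (a 0 * n 1 - a 1 * n 0) * ⟪n, b⟫ := by
    rw [wedge, real_inner_eq_fin_two]
    linear_combination (-(a 0 * b 1 - a 1 * b 0)) * hn' + (n 0 * b 1 - n 1 * b 0) * hna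
  have hnorm : |a 0 * n 1 - a 1 * n 0| = ‖a‖ := by
    rw [← abs_norm, ← sq_eq_sq_iff_abs_eq_abs, norm_sq_eq_fin_two]
    linear_combination (a 0 ^ 2 + a 1 ^ 2) * hn' - (a 0 * n 0 + a 1 * n 1) * hna
  rw [hwedge, abs_mul, hnorm]

lemma wedge_eq_zero_of_inner_normal_eq_zero {b x : ℝ²} (hb : b ≠ 0)
    (h : ∀ ν : ℝ², ‖ν‖ = 1 → ⟪ν, b⟫ = 0 → ⟪x, ν⟫ = 0) : wedge b x = 0 := by
  set r : ℝ² := !₂[-b 1, b 0]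
  have hr : ‖r‖ = ‖b‖ := by
    rw [← sq_eq_sq₀ (norm_nonneg _) (norm_nonneg _), norm_sq_eq_fin_two, norm_sq_eq_fin_two]
    simp [r, add_comm]
  have hb' : ‖b‖ ≠ 0 := norm_ne_zero_iff.2 hb
  have hν := h (‖b‖⁻¹ • r) (by rw [norm_smul, hr, norm_inv, norm_norm, inv_mul_cancel₀ hb'])
    (by rw [real_inner_smul_left, real_inner_eq_fin_two]; simp [r, mul_comm])
  rw [real_inner_smul_right, real_inner_eq_fin_two] at hν
  simpa [r, wedge, hb', mul_comm, sub_eq_add_neg, add_comm] using hν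

lemma injective_coprod_toSpanSingleton {u v : ℝ²} (h : wedge u v ≠ 0) : Function.Injective
    ((LinearMap.toSpanSingleton ℝ ℝ² u).coprod (LinearMap.toSpanSingleton ℝ ℝ² v)) := by
  refine (injective_iff_map_eq_zero _).2 fun y hy => ?_
  simp only [LinearMap.coprod_apply, LinearMap.toSpanSingleton_apply] at hy
  have h₁ : wedge u (y.1 • u + y.2 • v) = 0 := by simp [hy, wedge]
  have h₂ : wedge v (y.1 • u + y.2 • v) = 0 := by simp [hy, wedge]
  simp only [wedge_smul_add_smul, wedge_self, wedge_swap u v] at h₁ h₂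
  ext
  · exact (mul_eq_zero.1 (by linear_combination -h₂)).resolve_right h
  · exact (mul_eq_zero.1 (by linear_combination h₁)).resolve_right h

noncomputable def pairEquiv {u v : ℝ²} (h : wedge u v ≠ 0) : (ℝ × ℝ) ≃L[ℝ] ℝ² :=
  (LinearMap.linearEquivOfInjective _ (injective_coprod_toSpanSingleton h)
    (by simp)).toContinuousLinearEquiv

section PairEquiv

variable {u v : ℝ²}

@[simp]
lemma pairEquiv_apply (h : wedge u v ≠ 0) (y : ℝ × ℝ) : pairEquiv h y = y.1 • u + y.2 • v :=
  rfl

lemma eq_pairEquiv_symm (h : wedge u v ≠ 0) (x : ℝ²) :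
    x = ((pairEquiv h).symm x).1 • u + ((pairEquiv h).symm x).2 • v :=
  ((pairEquiv h).apply_symm_apply x).symm

lemma pairEquiv_symm_fst_eq_zero (h : wedge u v ≠ 0) {x : ℝ²}
    (hx : ∀ ν : ℝ², ‖ν‖ = 1 → ⟪ν, v⟫ = 0 → ⟪x, ν⟫ = 0) : ((pairEquiv h).symm x).1 = 0 := by
  have hv : v ≠ 0 := by rintro rfl; simp [wedge] at h
  have hx := wedge_eq_zero_of_inner_normal_eq_zero hv hx
  rw [eq_pairEquiv_symm h x, wedge_smul_add_smul, wedge_self, wedge_swap u v] at hx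
  exact (mul_eq_zero.1 (by linear_combination -hx)).resolve_right h

lemma pairEquiv_symm_fst_add_snd_eq_zero (h : wedge u v ≠ 0) {x : ℝ²}
    (hx : ∀ ν : ℝ², ‖ν‖ = 1 → ⟪ν, v - u⟫ = 0 → ⟪x, ν⟫ = 0) :
    ((pairEquiv h).symm x).1 + ((pairEquiv h).symm x).2 = 0 := by
  have hvu : v - u ≠ 0 := fun h₀ => h (by rw [sub_eq_zero.1 h₀, wedge_self])
  have hx := wedge_eq_zero_of_inner_normal_eq_zero hvu hx
  rw [eq_pairEquiv_symm h x, wedge_smul_add_smul] at hx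
  simp only [wedge, PiLp.sub_apply] at hx h
  exact (mul_eq_zero.1 (by linear_combination -hx)).resolve_right h

lemma inner_eq_pairEquiv_symm_snd_mul (h : wedge u v ≠ 0) {n : ℝ²} (hn : ⟪n, u⟫ = 0)
    (x : ℝ²) : ⟪x, n⟫ = ((pairEquiv h).symm x).2 * ⟪v, n⟫ := by
  conv_lhs => rw [eq_pairEquiv_symm h x]
  rw [inner_add_left, real_inner_smul_left, real_inner_smul_left, real_inner_comm, hn]
  ring

lemma image_pairEquiv_unitTriangle (h : wedge u v ≠ 0) (x₀ : ℝ²) :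
    (fun y => x₀ + pairEquiv h y) '' unitTriangle = convexHull ℝ {x₀ + u, x₀, x₀ + v} := by
  let T : (ℝ × ℝ) →ᵃ[ℝ] ℝ² := AffineMap.const ℝ (ℝ × ℝ) x₀
    + ((pairEquiv h : (ℝ × ℝ) →L[ℝ] ℝ²) : (ℝ × ℝ) →ₗ[ℝ] ℝ²).toAffineMap
  have hT : ⇑T = fun y => x₀ + pairEquiv h y := rfl
  rw [← hT, unitTriangle_eq_convexHull, AffineMap.image_convexHull]
  simp [hT, image_insert_eq, insert_comm]

theorem setIntegral_image_pairEquiv (h : wedge u v ≠ 0) {F : Type*} [NormedAddCommGroup F]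
    [NormedSpace ℝ F] (x₀ : ℝ²) {s : Set (ℝ × ℝ)} (hs : MeasurableSet s) (f : ℝ² → F) :
    ∫ x in (fun y => x₀ + pairEquiv h y) '' s, f x
      = |wedge u v| • ∫ y in s, f (x₀ + pairEquiv h y) := by
  let m : (ℝ × ℝ) ≃ᵐ ℝ² := MeasurableEquiv.finTwoArrow.symm.trans (MeasurableEquiv.toLp 2 _)
  have hm : MeasurePreserving m :=
    ((EuclideanSpace.volume_preserving_symm_measurableEquiv_toLp (Fin 2)).symm _).comp
      ((volume_preserving_finTwoArrow ℝ).symm _)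
  let L : ℝ² →L[ℝ] ℝ² :=
    (EuclideanSpace.proj 0).smulRight u + (EuclideanSpace.proj 1).smulRight v
  have hLm : ∀ y, L (m y) = pairEquiv h y := fun _ => rfl
  have hLinj : Function.Injective L := by
    have : ⇑L = pairEquiv h ∘ m.symm := by
      funext x
      rw [Function.comp_apply, ← hLm, m.apply_symm_apply]
    rw [this]
    exact (pairEquiv h).injective.comp m.symm.injective
  have hdet : L.det = wedge u v := by
    rw [ContinuousLinearMap.det,
      ← LinearMap.det_toMatrix (EuclideanSpace.basisFun (Fin 2) ℝ).toBasis, Matrix.det_fin_two]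
    simp [L, LinearMap.toMatrix_apply, wedge, mul_comm]
  have himage : (fun y => x₀ + pairEquiv h y) '' s = (fun x => x₀ + L x) '' (m '' s) := by
    rw [image_image]; simp only [hLm]
  rw [himage, integral_image_eq_integral_abs_det_fderiv_smul volume
      (m.measurableEmbedding.measurableSet_image' hs)
      (fun x _ => (L.hasFDerivAt.const_add x₀).hasFDerivWithinAt)
      ((add_right_injective x₀).comp hLinj).injOn f,
    hm.setIntegral_image_emb m.measurableEmbedding, hdet, integral_smul]
  simp only [hLm]

end PairEquiv

theorem setIntegral_convexHull_eq_of_trace_fderiv_eq_const {N E A n : ℝ²}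
    (hD : wedge (N - E) (A - E) ≠ 0) (hnN : ⟪n, N - E⟫ = 0) (hnA : ⟪n, A - E⟫ ≠ 0)
    {φ : ℝ² → ℝ²} {U : Set ℝ²} (hU : IsOpen U) (hMU : convexHull ℝ {N, E, A} ⊆ U)
    (hφ : ContDiffOn ℝ 1 φ U) {c : ℝ}
    (hdiv : ∀ x ∈ convexHull ℝ {N, E, A}, LinearMap.trace ℝ ℝ² (fderiv ℝ φ x).toLinearMap = c)
    (hNA : ∀ x ∈ segment ℝ N A, ∀ ν : ℝ², ‖ν‖ = 1 → ⟪ν, A - N⟫ = 0 → ⟪φ x, ν⟫ = 0)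
    (hEA : ∀ x ∈ segment ℝ E A, ∀ ν : ℝ², ‖ν‖ = 1 → ⟪ν, A - E⟫ = 0 → ⟪φ x, ν⟫ = 0) :
    ∫ x in convexHull ℝ {N, E, A}, φ x
      = (|wedge (N - E) (A - E)| / ⟪n, A - E⟫) •
        (((∫ t in (0 : ℝ)..1, ⟪φ (E + t • (N - E)), n⟫) / 3
            - ∫ t in (0 : ℝ)..1, t * ⟪φ (E + t • (N - E)), n⟫) • (N - E)
          + ((∫ t in (0 : ℝ)..1, ⟪φ (E + t • (N - E)), n⟫) / 3) • (A - E)) := by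
  set e := pairEquiv hD
  set T : ℝ × ℝ → ℝ² := fun y => E + e y
  set g : ℝ × ℝ → ℝ × ℝ := fun y => e.symm (φ (T y))
  have hM : convexHull ℝ {N, E, A} = T '' unitTriangle := by
    rw [image_pairEquiv_unitTriangle]; simp
  have hTM : ∀ y ∈ unitTriangle, T y ∈ convexHull ℝ {N, E, A} := fun y hy =>
    hM ▸ mem_image_of_mem T hy
  have hTc : ContDiff ℝ 1 T := contDiff_const.add e.contDiff
  have hΔV : unitTriangle ⊆ T ⁻¹' U := fun y hy => hMU (hTM y hy)
  have hg : ContDiffOn ℝ 1 g (T ⁻¹' U) :=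
    e.symm.contDiff.comp_contDiffOn (hφ.comp hTc.contDiffOn (mapsTo_preimage T U))
  have hgdiv : ∀ y ∈ unitTriangle, LinearMap.trace ℝ (ℝ × ℝ) (fderiv ℝ g y) = c := by
    intro y hy
    rw [trace_fderiv_conj e E ((hφ.differentiableOn one_ne_zero).differentiableAt
      (hU.mem_nhds (hΔV hy)))]
    exact hdiv _ (hTM y hy)
  have hleft : ∀ t ∈ Icc (0 : ℝ) 1, (g (0, t)).1 = 0 := fun t ht => by
    refine pairEquiv_symm_fst_eq_zero hD (hEA _ ?_)
    rw [segment_eq_image']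
    exact ⟨t, ht, by simp [T, e]⟩
  have hhyp : ∀ t ∈ Icc (0 : ℝ) 1, (g (1 - t, t)).1 + (g (1 - t, t)).2 = 0 := fun t ht => by
    refine pairEquiv_symm_fst_add_snd_eq_zero hD fun ν hν₁ hν₂ => hNA _ ?_ ν hν₁ ?_
    · rw [segment_eq_image']
      exact ⟨t, ht, by simp only [T, e, pairEquiv_apply]; module⟩
    · rwa [sub_sub_sub_cancel_right] at hν₂
  have hflux : ∀ t : ℝ, (g (t, 0)).2 = ⟪φ (E + t • (N - E)), n⟫ / ⟪n, A - E⟫ := fun t => by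
    rw [inner_eq_pairEquiv_symm_snd_mul hD hnN, real_inner_comm n, mul_div_cancel_right₀ _ hnA]
    simp [g, T, e]
  have hφg : ∫ y in unitTriangle, φ (E + e y) = e (∫ y in unitTriangle, g y) := by
    rw [← e.integral_comp_comm]
    simp only [g, T, e.apply_symm_apply]
  rw [hM, setIntegral_image_pairEquiv hD E measurableSet_unitTriangle, hφg,
    setIntegral_unitTriangle_of_trace_fderiv_eq_const (hU.preimage hTc.continuous) hΔV hg hgdiv
      hleft hhyp]
  simp only [hflux, mul_div_assoc', intervalIntegral.integral_div, e, pairEquiv_apply]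
  match_scalars <;> ring

/-- Key divergence identity established in the proof of Lemma 2:
for a C¹ vector field `φ` with constant divergence on the triangle
`M = conv {N, E, A}` whose normal trace vanishes on the edges `[N, A]` and `[E, A]`,
one has `∫_M φ = −(α₁ τ + α (E − G))`, where `α`, `α₁` are the flux and its first
moment across the edge `EN`. -/
theorem stmt3 (N E A : EuclideanSpace ℝ (Fin 2))
    (hindep : AffineIndependent ℝ ![N, E, A])
    (G : EuclideanSpace ℝ (Fin 2)) (hG : G = (1 / 3 : ℝ) • (N + E + A))
    (τ n : EuclideanSpace ℝ (Fin 2))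
    (hτ : τ = (‖N - E‖)⁻¹ • (N - E))
    (hn1 : ‖n‖ = 1) (hn2 : ⟪n, N - E⟫ = 0) (hn3 : 0 < ⟪n, A - E⟫)
    (φ : EuclideanSpace ℝ (Fin 2) → EuclideanSpace ℝ (Fin 2))
    (U : Set (EuclideanSpace ℝ (Fin 2))) (hU : IsOpen U)
    (hMU : convexHull ℝ {N, E, A} ⊆ U)
    (hφ : ContDiffOn ℝ 1 φ U)
    (c : ℝ)
    (hdiv : ∀ x ∈ convexHull ℝ ({N, E, A} : Set (EuclideanSpace ℝ (Fin 2))),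
      LinearMap.trace ℝ (EuclideanSpace ℝ (Fin 2)) (fderiv ℝ φ x).toLinearMap = c)
    (hNA : ∀ x ∈ segment ℝ N A, ∀ ν : EuclideanSpace ℝ (Fin 2),
      ‖ν‖ = 1 → ⟪ν, A - N⟫ = 0 → ⟪φ x, ν⟫ = 0)
    (hEA : ∀ x ∈ segment ℝ E A, ∀ ν : EuclideanSpace ℝ (Fin 2),
      ‖ν‖ = 1 → ⟪ν, A - E⟫ = 0 → ⟪φ x, ν⟫ = 0)
    (α α₁ : ℝ)
    (hα : α = ∫ s in (0 : ℝ)..‖N - E‖, ⟪φ (E + s • τ), n⟫)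
    (hα₁ : α₁ = ∫ s in (0 : ℝ)..‖N - E‖, s * ⟪φ (E + s • τ), n⟫) :
    (∫ x in convexHull ℝ {N, E, A}, φ x) = -(α₁ • τ + α • (E - G)) := by
  have hNE : N ≠ E := by simpa using hindep.injective.ne (show (0 : Fin 3) ≠ 1 by decide)
  set L := ‖N - E‖
  have hL : 0 < L := norm_pos_iff.2 (sub_ne_zero.2 hNE)
  have habs : |wedge (N - E) (A - E)| = L * ⟪n, A - E⟫ := by
    rw [abs_wedge_eq_norm_mul_abs_inner hn1 hn2, abs_of_pos hn3]
  have hD : wedge (N - E) (A - E) ≠ 0 := fun h => by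
    rw [h, abs_zero] at habs
    exact (mul_pos hL hn3).ne habs
  have hscale : ∀ f : ℝ → ℝ, ∫ s in (0 : ℝ)..L, f s = L * ∫ t in (0 : ℝ)..1, f (L * t) := by
    intro f
    rw [intervalIntegral.integral_comp_mul_left f hL.ne', smul_eq_mul,
      mul_inv_cancel_left₀ hL.ne']
    simp
  have hpt : ∀ t : ℝ, E + (L * t) • τ = E + t • (N - E) := by
    intro t
    rw [hτ, smul_smul, mul_comm L t, mul_assoc, mul_inv_cancel₀ hL.ne', mul_one]
  have hα' : α = L * ∫ t in (0 : ℝ)..1, ⟪φ (E + t • (N - E)), n⟫ := by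
    rw [hα, hscale]; simp only [hpt]
  have hα₁' : α₁ = L ^ 2 * ∫ t in (0 : ℝ)..1, t * ⟪φ (E + t • (N - E)), n⟫ := by
    rw [hα₁, hscale]
    simp only [hpt, mul_assoc, intervalIntegral.integral_const_mul]
    ring
  rw [setIntegral_convexHull_eq_of_trace_fderiv_eq_const hD hn2 hn3.ne' hU hMU hφ hdiv hNA hEA,
    habs, hα', hα₁', hτ, hG]
  match_scalars <;> field_simp <;> ring
end

section
/- Let S, N, E, A, D ∈ ℝ² with E ≠ N, let τ = (N − E)/‖N − E‖ and let n be a unit vector orthogonal to N − E. Let L = (S + E + N)/3, M = (N + E + A)/3, R = (E + S + D)/3 be the centroids of the triples (S,E,N), (N,E,A), (E,S,D), and let ρ_L, ρ_M, ρ_R be the corresponding radii of gyration. Then for all real numbers η, α, δ: −(δ + α − η)·(ρ_L² + ‖L − S‖²) + (ρ_R² + ‖R − S‖²)·δ + ‖E − S‖²·α + 2·⟨E − S, τ⟩·⟨M − E, τ⟩·α + (ρ_M² + ‖M − E‖²)·α + 2·⟨N − S, n⟩·⟨M − E, n⟩·α = (ρ_L² + ‖L − S‖²)·η + (1/6)·⟨A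 − S, (E − S) + (A − S) + (N − S)⟩·α + (1/6)·⟨D − N, (D − S) + (E − S) + (N − S)⟩·δ. (The vector identity proving Proposition 4: it rewrites expression (3.21) as the right-hand side of relation (3.17).) -/
/-! For a triple `X, Y, Z` and a point `P`, `ρ² + ‖G - P‖²` is the polar second moment about `P`
of the triangle `XYZ` as a uniform plate: `(‖x‖² + ‖y‖² + ‖z‖² + ‖x + y + z‖²) / 12` with
`x = X - P` etc. Replacing a vertex `W` by `Z` changes it by `⟪Z - W, x + y + z + w⟫ / 6`, which
produces both inner products on the right, comparing `N E A` and `E S D` with `S E N`. On the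
left, since `n ⊥ N - E`, Parseval turns the `τ`- and `n`-terms into `2 ⟪E - S, M - E⟫`, exactly the
parallel axis correction that moves the moment of `N E A` from `E` to `S`. -/

open scoped RealInnerProductSpace

theorem inner_mul_inner_add_inner_mul_inner_of_orthonormal {V : Type*}
    [NormedAddCommGroup V] [InnerProductSpace ℝ V] (hV : Module.finrank ℝ V = 2) {τ n : V}
    (hτn : Orthonormal ℝ ![τ, n]) (u v : V) :
    ⟪u, τ⟫ * ⟪v, τ⟫ + ⟪u, n⟫ * ⟪v, n⟫ = ⟪u, v⟫ := by
  let b := (basisOfOrthonormalOfCardEqFinrank hτn (by simp [hV])).toOrthonormalBasis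
    (by simpa using hτn)
  simpa [b, Fin.sum_univ_two, real_inner_comm v] using b.sum_inner_mul_inner u v

section SecondMoment

variable {V : Type*} [NormedAddCommGroup V] [InnerProductSpace ℝ V]

noncomputable def secondMoment (X Y Z P : V) : ℝ :=
  (1 / 36) * (‖X - Y‖ ^ 2 + ‖Y - Z‖ ^ 2 + ‖Z - X‖ ^ 2) + ‖(1 / 3 : ℝ) • (X + Y + Z) - P‖ ^ 2

theorem sq_sqrt_add_norm_sq_eq_secondMoment (X Y Z P : V) :
    Real.sqrt ((1 / 36) * (‖X - Y‖ ^ 2 + ‖Y - Z‖ ^ 2 + ‖Z - X‖ ^ 2)) ^ 2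
      + ‖(1 / 3 : ℝ) • (X + Y + Z) - P‖ ^ 2 = secondMoment X Y Z P := by
  rw [Real.sq_sqrt (by positivity), secondMoment]

theorem secondMoment_eq (X Y Z P : V) :
    secondMoment X Y Z P =
      (‖X - P‖ ^ 2 + ‖Y - P‖ ^ 2 + ‖Z - P‖ ^ 2 + ‖(X - P) + (Y - P) + (Z - P)‖ ^ 2) / 12 := by
  have hG : (1 / 3 : ℝ) • (X + Y + Z) - P = (1 / 3 : ℝ) • ((X - P) + (Y - P) + (Z - P)) := by
    module
  rw [secondMoment, hG, ← sub_sub_sub_cancel_right X Y P, ← sub_sub_sub_cancel_right Y Z P,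
    ← sub_sub_sub_cancel_right Z X P]
  generalize X - P = x, Y - P = y, Z - P = z
  simp only [← real_inner_self_eq_norm_sq, inner_add_left, inner_add_right, inner_sub_left,
    inner_sub_right, real_inner_smul_right, real_inner_comm]
  ring

theorem secondMoment_swap (X Y Z P : V) : secondMoment Y X Z P = secondMoment X Y Z P := by
  rw [secondMoment, secondMoment, add_comm Y X, norm_sub_rev Y X, norm_sub_rev X Z,
    norm_sub_rev Z Y]
  ring

theorem secondMoment_rotate (X Y Z P : V) : secondMoment Y Z X P = secondMoment X Y Z P := by
  rw [secondMoment, secondMoment, ← add_rotate X Y Z]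
  ring

theorem secondMoment_sub_secondMoment (X Y Z W P : V) :
    secondMoment X Y Z P - secondMoment X Y W P =
      ⟪Z - W, (X - P) + (Y - P) + (Z - P) + (W - P)⟫ / 6 := by
  rw [secondMoment_eq, secondMoment_eq, ← sub_sub_sub_cancel_right Z W P]
  generalize X - P = x, Y - P = y, Z - P = z, W - P = w
  simp only [← real_inner_self_eq_norm_sq, inner_add_left, inner_add_right, inner_sub_left,
    real_inner_comm]
  ring

theorem secondMoment_eq_secondMoment_add (X Y Z P Q : V) :
    secondMoment X Y Z P = secondMoment X Y Z Q + ‖Q - P‖ ^ 2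
      + 2 * ⟪Q - P, (1 / 3 : ℝ) • (X + Y + Z) - Q⟫ := by
  have : (1 / 3 : ℝ) • (X + Y + Z) - P = ((1 / 3 : ℝ) • (X + Y + Z) - Q) + (Q - P) := by abel
  rw [secondMoment, secondMoment, this, norm_add_sq_real, real_inner_comm]
  ring

end SecondMoment

/-- The vector identity proving Proposition 4: expression (3.21) rewritten as the
right-hand side of relation (3.17). -/
theorem stmt7 (S N E A D : EuclideanSpace ℝ (Fin 2)) (hEN : E ≠ N)
    (τ n : EuclideanSpace ℝ (Fin 2))
    (hτ : τ = (‖N - E‖)⁻¹ • (N - E))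
    (hn1 : ‖n‖ = 1) (hn2 : ⟪n, N - E⟫ = 0)
    (L M R : EuclideanSpace ℝ (Fin 2))
    (hL : L = (1 / 3 : ℝ) • (S + E + N))
    (hM : M = (1 / 3 : ℝ) • (N + E + A))
    (hR : R = (1 / 3 : ℝ) • (E + S + D))
    (ρL ρM ρR : ℝ)
    (hρL : ρL = Real.sqrt ((1 / 36) * (‖S - E‖ ^ 2 + ‖E - N‖ ^ 2 + ‖N - S‖ ^ 2)))
    (hρM : ρM = Real.sqrt ((1 / 36) * (‖N - E‖ ^ 2 + ‖E - A‖ ^ 2 + ‖A - N‖ ^ 2)))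
    (hρR : ρR = Real.sqrt ((1 / 36) * (‖E - S‖ ^ 2 + ‖S - D‖ ^ 2 + ‖D - E‖ ^ 2)))
    (η α δ : ℝ) :
    -(δ + α - η) * (ρL ^ 2 + ‖L - S‖ ^ 2) + (ρR ^ 2 + ‖R - S‖ ^ 2) * δ
        + ‖E - S‖ ^ 2 * α
        + 2 * ⟪E - S, τ⟫ * ⟪M - E, τ⟫ * α
        + (ρM ^ 2 + ‖M - E‖ ^ 2) * α
        + 2 * ⟪N - S, n⟫ * ⟪M - E, n⟫ * α =
      (ρL ^ 2 + ‖L - S‖ ^ 2) * η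
        + (1 / 6) * ⟪A - S, (E - S) + (A - S) + (N - S)⟫ * α
        + (1 / 6) * ⟪D - N, (D - S) + (E - S) + (N - S)⟫ * δ := by
  have hτ1 : ‖τ‖ = 1 := hτ ▸ norm_smul_inv_norm (sub_ne_zero.mpr hEN.symm)
  have hτ_perp_n : ⟪τ, n⟫ = 0 := by rw [hτ, real_inner_smul_left, real_inner_comm, hn2, mul_zero]
  have hτn : Orthonormal ℝ ![τ, n] := by simp [hτ1, hn1, hτ_perp_n]
  have hNSn : ⟪N - S, n⟫ = ⟪E - S, n⟫ := by
    rw [← sub_add_sub_cancel N E S, inner_add_left, real_inner_comm, hn2, zero_add]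
  have hParseval := inner_mul_inner_add_inner_mul_inner_of_orthonormal
    finrank_euclideanSpace_fin hτn (E - S) (M - E)
  have hKL : ρL ^ 2 + ‖L - S‖ ^ 2 = secondMoment S E N S := by
    rw [hρL, hL, sq_sqrt_add_norm_sq_eq_secondMoment]
  have hKM : ρM ^ 2 + ‖M - E‖ ^ 2 = secondMoment N E A E := by
    rw [hρM, hM, sq_sqrt_add_norm_sq_eq_secondMoment]
  have hKR : ρR ^ 2 + ‖R - S‖ ^ 2 = secondMoment E S D S := by
    rw [hρR, hR, sq_sqrt_add_norm_sq_eq_secondMoment]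
  have hParallelAxis := secondMoment_eq_secondMoment_add N E A S E
  rw [← hM] at hParallelAxis
  have hα := secondMoment_sub_secondMoment N E A S S
  rw [secondMoment_swap E N S S, secondMoment_rotate S E N S, sub_self, add_zero,
    add_rotate] at hα
  have hδ := secondMoment_sub_secondMoment E S D N S
  rw [secondMoment_swap S E N S, sub_self, add_zero, add_comm (E - S) (D - S)] at hδ
  linear_combination (-(δ + α)) * hKL + δ * hKR + α * hKM + 2 * α * ⟪M - E, n⟫ * hNSn
    + 2 * α * hParseval - α * hParallelAxis + α * hα + δ * hδ
end

section
/- Let S, N, E, A, D ∈ ℝ² with S ≠ N. Let L = (S + E + N)/3, M = (N + E + A)/3, R = (E + S + D)/3 and let ρ_L = √((1/36)·(‖S−E‖² + ‖E−N‖² + ‖N−S‖²)). For real numbers η, α, δ define η₂ = (ρ_L² + ‖L − S‖²)·η + (1/6)·⟨A − S, (E − S) + (A − S) + (N − S)⟩·α + (1/6)·⟨D − N, (D − S) + (E − S) + (N − S)⟩·δ and η̃₂ = (ρ_L² + ‖L − N‖²)·η + (1/6)·⟨A − S, (S − N) + (E − N) + (A − N)⟩·α + (1/6)·⟨D − N,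 (S − N) + (D − N) + (E − N)⟩·δ. Then (η₂ − η̃₂ + ‖N − S‖²·η)/(2·‖N − S‖) = (1/‖N − S‖)·⟨(L − S)·η + (M − L)·α + (R − L)·δ, N − S⟩. (Proposition 5, first expression (3.22) for the first order momentum η₁.) -/
/-!
The terms in `ρ_L²` cancel, and what is left is linear in `η`, `α`, `δ`. For `η` it is the
polarization identity `‖L - S‖² - ‖L - N‖² + ‖N - S‖² = 2⟪L - S, N - S⟫`. For `α` and `δ` the two
sums of edge vectors differ by `4 • (N - S)`, while `M - L = (A - S) / 3` and `R - L = (D - N) / 3`.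
-/

open scoped RealInnerProductSpace

section

variable {V : Type*} [NormedAddCommGroup V] [InnerProductSpace ℝ V]

theorem norm_sub_sq_sub_norm_sub_sq_add_norm_sub_sq (x a b : V) :
    ‖x - a‖ ^ 2 - ‖x - b‖ ^ 2 + ‖b - a‖ ^ 2 = 2 * ⟪x - a, b - a⟫ := by
  rw [show x - b = (x - a) - (b - a) by abel, norm_sub_sq_real (x - a)]
  ring

theorem inner_sum_sub_sub_inner_sum_sub (w S N P Q : V) :
    ⟪w, (P - S) + (Q - S) + (N - S)⟫ - ⟪w, (S - N) + (P - N) + (Q - N)⟫ = 4 * ⟪w, N - S⟫ := by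
  rw [← inner_sub_right, ← real_inner_smul_right]
  congr 1
  module

end

theorem stmt8_general (S N E A D : EuclideanSpace ℝ (Fin 2))
    (L M R : EuclideanSpace ℝ (Fin 2))
    (hL : L = (1 / 3 : ℝ) • (S + E + N))
    (hM : M = (1 / 3 : ℝ) • (N + E + A))
    (hR : R = (1 / 3 : ℝ) • (E + S + D))
    (ρL : ℝ)
    (η α δ η₂ η₂' : ℝ)
    (hη₂ : η₂ = (ρL ^ 2 + ‖L - S‖ ^ 2) * η
      + (1 / 6) * ⟪A - S, (E - S) + (A - S) + (N - S)⟫ * α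
      + (1 / 6) * ⟪D - N, (D - S) + (E - S) + (N - S)⟫ * δ)
    (hη₂' : η₂' = (ρL ^ 2 + ‖L - N‖ ^ 2) * η
      + (1 / 6) * ⟪A - S, (S - N) + (E - N) + (A - N)⟫ * α
      + (1 / 6) * ⟪D - N, (S - N) + (D - N) + (E - N)⟫ * δ) :
    (η₂ - η₂' + ‖N - S‖ ^ 2 * η) / (2 * ‖N - S‖) =
      (1 / ‖N - S‖) * ⟪η • (L - S) + α • (M - L) + δ • (R - L), N - S⟫ := by
  have hML : M - L = (1 / 3 : ℝ) • (A - S) := by rw [hM, hL]; module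
  have hRL : R - L = (1 / 3 : ℝ) • (D - N) := by rw [hR, hL]; module
  have numerator : η₂ - η₂' + ‖N - S‖ ^ 2 * η
      = 2 * ⟪η • (L - S) + α • (M - L) + δ • (R - L), N - S⟫ := by
    rw [hML, hRL]
    simp only [inner_add_left, real_inner_smul_left]
    linear_combination hη₂ - hη₂' + η * norm_sub_sq_sub_norm_sub_sq_add_norm_sub_sq L S N
      + (α / 6) * inner_sum_sub_sub_inner_sum_sub (A - S) S N E A
      + (δ / 6) * inner_sum_sub_sub_inner_sum_sub (D - N) S N D E
  rw [numerator]
  ring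

/-- Proposition 5, first expression (3.22) for the first order momentum `η₁`. -/
theorem stmt8 (S N E A D : EuclideanSpace ℝ (Fin 2)) (hSN : S ≠ N)
    (L M R : EuclideanSpace ℝ (Fin 2))
    (hL : L = (1 / 3 : ℝ) • (S + E + N))
    (hM : M = (1 / 3 : ℝ) • (N + E + A))
    (hR : R = (1 / 3 : ℝ) • (E + S + D))
    (ρL : ℝ)
    (hρL : ρL = Real.sqrt ((1 / 36) * (‖S - E‖ ^ 2 + ‖E - N‖ ^ 2 + ‖N - S‖ ^ 2)))
    (η α δ η₂ η₂' : ℝ)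
    (hη₂ : η₂ = (ρL ^ 2 + ‖L - S‖ ^ 2) * η
      + (1 / 6) * ⟪A - S, (E - S) + (A - S) + (N - S)⟫ * α
      + (1 / 6) * ⟪D - N, (D - S) + (E - S) + (N - S)⟫ * δ)
    (hη₂' : η₂' = (ρL ^ 2 + ‖L - N‖ ^ 2) * η
      + (1 / 6) * ⟪A - S, (S - N) + (E - N) + (A - N)⟫ * α
      + (1 / 6) * ⟪D - N, (S - N) + (D - N) + (E - N)⟫ * δ) :
    (η₂ - η₂' + ‖N - S‖ ^ 2 * η) / (2 * ‖N - S‖) =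
      (1 / ‖N - S‖) * ⟪η • (L - S) + α • (M - L) + δ • (R - L), N - S⟫ :=
  stmt8_general S N E A D L M R hL hM hR ρL η α δ η₂ η₂' hη₂ hη₂'
end
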